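/- Let P be a finite bounded poset with |P| > 1. The poset Antb(P) of blockers in P (the image of the blocker map, with the order induced from Ant(P)) is self-dual: the restriction of the blocker map b to Antb(P) is an order-reversing bijection of Antb(P) onto itself, i.e., for B₁, B₂ ∈ Antb(P), B₁ ≤ B₂ if and only if b(B₁) ≥ b(B₂). -/

import Mathlib

open scoped Classical
open Set

/-- The order filter generated by a subset. -/
def upFilter (P : Type*) [Preorder P] (S : Set P) : Set P := {x | ∃ s ∈ S, s ≤ x}

/-- The set of minimal elements of a subset. -/
def minsOf (P : Type*) [Preorder P] (S : Set P) : Set P := {x | Minimal (· ∈ S) x}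

/-- The set of intersecters for `A` in `P`. -/
def inters (P : Type*) [PartialOrder P] [OrderBot P] (A : Set P) : Set P :=
  if A = ∅ then Set.univ
  else if A = {(⊥ : P)} then ∅
  else {b | ∀ a ∈ A, a ≠ ⊥ → ∃ z : P, IsAtom z ∧ z ≤ b ∧ z ≤ a}

/-- The set of complementers for `A` in `P`. -/
def compls (P : Type*) [PartialOrder P] [OrderBot P] (A : Set P) : Set P := (inters P A)ᶜ

/-- The blocker map: the set of minimal intersecters for `A` in `P`. -/
def bmap (P : Type*) [PartialOrder P] [OrderBot P] (A : Set P) : Set P := minsOf P (inters P A)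

/-- The set of blockers in `P`: the image of the blocker map on antichains. -/
def Antb (P : Type*) [PartialOrder P] [OrderBot P] : Set (Set P) :=
  bmap P '' {A : Set P | IsAntichain (· ≤ ·) A}

/-!
Write `x ⋈ y` when some atom lies below both `x` and `y`. This relation is symmetric, so its
polar `S ↦ S^⋈` is an antitone Galois connection on subsets of `P` with `S^⋈⋈⋈ = S^⋈`.
For an antichain `A` the intersecters form the up-set `A^⋈`, hence `b(A) = min A^⋈` and, `P`
being finite, `F(b(A)) = A^⋈`. As `S^⋈` only depends on the up-closure `F(S)`, this gives
`b(b(b(A))) = min A^⋈⋈⋈ = b(A)`, and `F(B)` is Galois-closed for every blocker `B`, so that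
`F(B₁) ⊆ F(B₂)` iff `B₂^⋈ ⊆ B₁^⋈`, i.e. `F(b(B₂)) ⊆ F(b(B₁))`.
-/

section Blockers

variable {P : Type*} [PartialOrder P]

lemma isAntichain_minsOf (S : Set P) : IsAntichain (· ≤ ·) (minsOf P S) :=
  fun _ hx _ hy hne hle => hne (le_antisymm hle (hy.2 hx.1 hle))

lemma upFilter_minsOf [WellFoundedLT P] {S : Set P} (hS : IsUpperSet S) :
    upFilter P (minsOf P S) = S := by
  ext x
  refine ⟨fun ⟨m, hm, hmx⟩ => hS hmx hm.1, fun hx => ?_⟩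
  obtain ⟨m, hmx, hm⟩ := exists_minimal_le_of_wellFoundedLT (· ∈ S) x hx
  exact ⟨m, hm, hmx⟩

section OrderBot

variable [OrderBot P]

def ShareAtom (x y : P) : Prop := ∃ z, IsAtom z ∧ z ≤ x ∧ z ≤ y

lemma ShareAtom.symm {x y : P} (h : ShareAtom x y) : ShareAtom y x :=
  let ⟨z, hz, hzx, hzy⟩ := h
  ⟨z, hz, hzy, hzx⟩

lemma ShareAtom.mono_left {x x' y : P} (h : ShareAtom x y) (hx : x ≤ x') : ShareAtom x' y :=
  let ⟨z, hz, hzx, hzy⟩ := h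
  ⟨z, hz, hzx.trans hx, hzy⟩

lemma not_shareAtom_bot (x : P) : ¬ ShareAtom x ⊥ :=
  fun ⟨_, hz, _, hzb⟩ => hz.1 (le_bot_iff.mp hzb)

lemma lowerPolar_shareAtom (S : Set P) :
    lowerPolar ShareAtom S = upperPolar ShareAtom S :=
  Set.ext fun _ => forall₂_congr fun _ _ => ⟨ShareAtom.symm, ShareAtom.symm⟩

lemma upperPolar_shareAtom_upperPolar_upperPolar (S : Set P) :
    upperPolar ShareAtom (upperPolar ShareAtom (upperPolar ShareAtom S)) =
      upperPolar ShareAtom S := by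
  simpa only [lowerPolar_shareAtom] using upperPolar_lowerPolar_upperPolar ShareAtom S

lemma isUpperSet_upperPolar_shareAtom (S : Set P) : IsUpperSet (upperPolar ShareAtom S) :=
  fun _ _ hxy hx _ ha => (hx ha).symm.mono_left hxy |>.symm

lemma upperPolar_shareAtom_upFilter (S : Set P) :
    upperPolar ShareAtom (upFilter P S) = upperPolar ShareAtom S := by
  refine subset_antisymm (upperPolar_anti _ fun s hs => ⟨s, hs, le_rfl⟩) ?_
  rintro x hx a ⟨s, hs, hsa⟩
  exact (hx hs).mono_left hsa

/-- The three cases of `inters` collapse on antichains: an antichain containing `⊥` is `{⊥}`,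
whose polar is empty since no atom lies below `⊥`. -/
lemma inters_eq_upperPolar {A : Set P} (hA : IsAntichain (· ≤ ·) A) :
    inters P A = upperPolar ShareAtom A := by
  unfold inters
  split_ifs with hempty hbot
  · rw [hempty, upperPolar_empty]
  · rw [hbot]
    ext x
    simp only [mem_upperPolar_singleton, mem_empty_iff_false, false_iff]
    exact fun h => not_shareAtom_bot x h.symm
  · have hbotA : (⊥ : P) ∉ A := mt hA.bot_mem_iff.mp hbot
    ext x
    exact forall₂_congr fun a ha =>
      ⟨fun h => ShareAtom.symm (h (ne_of_mem_of_not_mem ha hbotA)), fun h _ => h.symm⟩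

lemma isAntichain_bmap (A : Set P) : IsAntichain (· ≤ ·) (bmap P A) :=
  isAntichain_minsOf _

lemma bmap_eq_minsOf_upperPolar {A : Set P} (hA : IsAntichain (· ≤ ·) A) :
    bmap P A = minsOf P (upperPolar ShareAtom A) := by
  rw [bmap, inters_eq_upperPolar hA]

lemma isAntichain_of_mem_Antb {B : Set P} (hB : B ∈ Antb P) : IsAntichain (· ≤ ·) B := by
  obtain ⟨A, -, rfl⟩ := hB
  exact isAntichain_bmap A

lemma bmap_mem_Antb {B : Set P} (hB : B ∈ Antb P) : bmap P B ∈ Antb P :=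
  ⟨B, isAntichain_of_mem_Antb hB, rfl⟩

section WellFoundedLT

variable [WellFoundedLT P]

lemma upFilter_bmap {A : Set P} (hA : IsAntichain (· ≤ ·) A) :
    upFilter P (bmap P A) = upperPolar ShareAtom A := by
  rw [bmap_eq_minsOf_upperPolar hA, upFilter_minsOf (isUpperSet_upperPolar_shareAtom A)]

lemma upperPolar_shareAtom_bmap {A : Set P} (hA : IsAntichain (· ≤ ·) A) :
    upperPolar ShareAtom (bmap P A) = upperPolar ShareAtom (upperPolar ShareAtom A) := by
  rw [← upperPolar_shareAtom_upFilter, upFilter_bmap hA]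

lemma bmap_bmap_bmap {A : Set P} (hA : IsAntichain (· ≤ ·) A) :
    bmap P (bmap P (bmap P A)) = bmap P A := by
  rw [bmap_eq_minsOf_upperPolar (isAntichain_bmap _),
    upperPolar_shareAtom_bmap (isAntichain_bmap _), upperPolar_shareAtom_bmap hA,
    upperPolar_shareAtom_upperPolar_upperPolar, bmap_eq_minsOf_upperPolar hA]

lemma bmap_bmap_of_mem_Antb {B : Set P} (hB : B ∈ Antb P) : bmap P (bmap P B) = B := by
  obtain ⟨A, hA, rfl⟩ := hB
  exact bmap_bmap_bmap hA

lemma upFilter_eq_of_mem_Antb {B : Set P} (hB : B ∈ Antb P) :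
    upFilter P B = upperPolar ShareAtom (upperPolar ShareAtom B) := by
  obtain ⟨A, hA, rfl⟩ := hB
  rw [upperPolar_shareAtom_bmap hA, upperPolar_shareAtom_upperPolar_upperPolar, upFilter_bmap hA]

/-- Up-closures of blockers are Galois-closed, so they compare as their polars in reverse. -/
lemma upFilter_subset_iff_of_mem_Antb {B₁ B₂ : Set P}
    (hB₁ : B₁ ∈ Antb P) (hB₂ : B₂ ∈ Antb P) :
    upFilter P B₁ ⊆ upFilter P B₂ ↔ upFilter P (bmap P B₂) ⊆ upFilter P (bmap P B₁) := by
  rw [upFilter_eq_of_mem_Antb hB₂, subset_upperPolar_iff_subset_lowerPolar,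
    lowerPolar_shareAtom, upperPolar_shareAtom_upFilter,
    upFilter_bmap (isAntichain_of_mem_Antb hB₁), upFilter_bmap (isAntichain_of_mem_Antb hB₂)]

end WellFoundedLT

end OrderBot

end Blockers

theorem stmt_17_general {P : Type*} [PartialOrder P] [BoundedOrder P] [Fintype P] :
    Set.BijOn (bmap P) (Antb P) (Antb P) ∧
    ∀ B₁ ∈ Antb P, ∀ B₂ ∈ Antb P,
      (upFilter P B₁ ⊆ upFilter P B₂ ↔ upFilter P (bmap P B₂) ⊆ upFilter P (bmap P B₁)) := by
  have hinv : InvOn (bmap P) (bmap P) (Antb P) (Antb P) :=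
    ⟨fun _ hB => bmap_bmap_of_mem_Antb hB, fun _ hB => bmap_bmap_of_mem_Antb hB⟩
  exact ⟨hinv.bijOn (fun _ => bmap_mem_Antb) (fun _ => bmap_mem_Antb),
    fun _ hB₁ _ hB₂ => upFilter_subset_iff_of_mem_Antb hB₁ hB₂⟩

theorem stmt_17 {P : Type*} [PartialOrder P] [BoundedOrder P] [Fintype P] [Nontrivial P] :
    Set.BijOn (bmap P) (Antb P) (Antb P) ∧
    ∀ B₁ ∈ Antb P, ∀ B₂ ∈ Antb P,
      (upFilter P B₁ ⊆ upFilter P B₂ ↔ upFilter P (bmap P B₂) ⊆ upFilter P (bmap P B₁)) :=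
  stmt_17_general
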